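/- arXiv:2309.14441 — 3 statements merged into one kernel-verified Lean document; each statement's English description precedes it below -/
import Mathlib

section
/- Let (u_n) be a real sequence, and let c > 0, α ≥ 0 and d > 1 be real constants such that u_n is asymptotically equivalent to c · d^n · n^(−α) as n → ∞ (i.e., the ratio tends to 1). Then the partial sums satisfy: ∑_{k=1}^{n} u_k is asymptotically equivalent to c · (d/(d−1)) · d^n · n^(−α) as n → ∞. -/
/-!
Put `g n = d ^ n * n ^ (-α)`. Since `g n / g (n + 1) → d⁻¹`, the increments of `(d / (d - 1)) * g`
are asymptotic to `g (n + 1)`. These are nonnegative with divergent partial sums, and for such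
sequences asymptotic equivalence passes to partial sums (a discrete Stolz–Cesàro rule); telescoping
gives `∑_{k ≤ n} g k ~ (d / (d - 1)) * g n`, and the same rule transfers this from `c * g` to `u`.
-/

open Filter Finset Topology Asymptotics

theorem Finset.sum_Icc_one_eq_sum_range_succ {M : Type*} [AddCommMonoid M] (f : ℕ → M)
    (n : ℕ) : ∑ k ∈ Icc 1 n, f k = ∑ k ∈ range n, f (k + 1) := by
  rw [← Ico_add_one_right_eq_Icc, sum_Ico_eq_sum_range]
  simp only [add_comm, Nat.add_sub_cancel]

theorem tendsto_sum_range_atTop_of_tendsto_atTop {v : ℕ → ℝ} (hv : 0 ≤ v)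
    (h : Tendsto v atTop atTop) : Tendsto (fun n => ∑ i ∈ range n, v i) atTop atTop := by
  refine (tendsto_add_atTop_iff_nat 1).mp (tendsto_atTop_mono (fun n => ?_) h)
  exact single_le_sum (fun i _ => hv i) (self_mem_range_succ n)

theorem Asymptotics.IsEquivalent.sum_range {u v : ℕ → ℝ} (huv : u ~[atTop] v) (hv : 0 ≤ v)
    (hsum : Tendsto (fun n => ∑ i ∈ range n, v i) atTop atTop) :
    (fun n => ∑ i ∈ range n, u i) ~[atTop] fun n => ∑ i ∈ range n, v i := by
  refine (huv.isLittleO.sum_range hv hsum).congr_left fun n => ?_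
  simp only [Pi.sub_apply, sum_sub_distrib]

theorem isEquivalent_sum_range_of_isEquivalent_sub {g v : ℕ → ℝ}
    (h : (fun n => g (n + 1) - g n) ~[atTop] v) (hv : 0 ≤ v)
    (hsum : Tendsto (fun n => ∑ i ∈ range n, v i) atTop atTop) :
    (fun n => ∑ i ∈ range n, v i) ~[atTop] g := by
  have htelescope : (fun n => g n - g 0) ~[atTop] fun n => ∑ i ∈ range n, v i := by
    simpa only [sum_range_sub] using h.sum_range hv hsum
  have hg : Tendsto g atTop atTop :=
    (tendsto_atTop_add_const_right _ (g 0) (htelescope.symm.tendsto_atTop hsum)).congr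
      fun n => sub_add_cancel (g n) (g 0)
  refine htelescope.symm.trans ?_
  simpa only [sub_eq_add_neg] using
    IsEquivalent.refl.add_const_of_norm_tendsto_atTop (tendsto_norm_atTop_atTop.comp hg)

theorem isEquivalent_sum_range_succ_of_tendsto_div_succ {g : ℕ → ℝ} {r : ℝ} (hg : 0 ≤ g)
    (hr : r ≠ 1) (hratio : Tendsto (fun n => g n / g (n + 1)) atTop (𝓝 r))
    (htop : Tendsto g atTop atTop) :
    (fun n => ∑ k ∈ range n, g (k + 1)) ~[atTop] fun n => (1 - r)⁻¹ * g n := by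
  have hgsucc : Tendsto (fun n => g (n + 1)) atTop atTop := htop.comp (tendsto_add_atTop_nat 1)
  refine isEquivalent_sum_range_of_isEquivalent_sub (isEquivalent_of_tendsto_one ?_)
    (fun k => hg (k + 1)) (tendsto_sum_range_atTop_of_tendsto_atTop (fun k => hg (k + 1)) hgsucc)
  have hlim : Tendsto (fun n => (1 - r)⁻¹ * (1 - g n / g (n + 1))) atTop (𝓝 1) := by
    have := (tendsto_const_nhds (x := (1 : ℝ))).sub hratio |>.const_mul (1 - r)⁻¹
    rwa [inv_mul_cancel₀ (sub_ne_zero.mpr hr.symm)] at this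
  refine hlim.congr' ?_
  filter_upwards [hgsucc.eventually_gt_atTop 0] with n hn
  simp only [Pi.div_apply]
  field_simp

theorem tendsto_pow_mul_rpow_neg_atTop {d : ℝ} (hd : 1 < d) (α : ℝ) :
    Tendsto (fun n : ℕ => d ^ n * (n : ℝ) ^ (-α)) atTop atTop := by
  refine ((tendsto_exp_mul_div_rpow_atTop α _ (Real.log_pos hd)).comp
    tendsto_natCast_atTop_atTop).congr fun n => ?_
  simp only [Function.comp_apply, mul_comm (Real.log d), Real.exp_nat_mul,
    Real.exp_log (zero_lt_one.trans hd), Real.rpow_neg n.cast_nonneg, div_eq_mul_inv]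

theorem tendsto_pow_mul_rpow_neg_div_succ {d : ℝ} (hd : d ≠ 0) (α : ℝ) :
    Tendsto (fun n : ℕ => d ^ n * (n : ℝ) ^ (-α) / (d ^ (n + 1) * ((n + 1 : ℕ) : ℝ) ^ (-α)))
      atTop (𝓝 d⁻¹) := by
  have hlim : Tendsto (fun n : ℕ => ((n : ℝ) / (n + 1)) ^ (-α)) atTop (𝓝 1) := by
    simpa using (tendsto_natCast_div_add_atTop (1 : ℝ)).rpow_const (Or.inl one_ne_zero)
  have := hlim.const_mul d⁻¹
  rw [mul_one] at this
  refine this.congr fun n => ?_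
  rw [mul_div_mul_comm, pow_succ, div_mul_cancel_left₀ (pow_ne_zero n hd),
    Real.div_rpow n.cast_nonneg (by positivity)]
  push_cast
  ring

theorem sum_isEquivalent_of_isEquivalent_geom_general
    (u : ℕ → ℝ) (c α d : ℝ) (hc : 0 < c) (hd : 1 < d)
    (hu : Asymptotics.IsEquivalent atTop u
      (fun n => c * d ^ n * (n : ℝ) ^ (-α))) :
    Asymptotics.IsEquivalent atTop
      (fun n => ∑ k ∈ Finset.Icc 1 n, u k)
      (fun n => c * (d / (d - 1)) * d ^ n * (n : ℝ) ^ (-α)) := by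
  set g : ℕ → ℝ := fun n => d ^ n * (n : ℝ) ^ (-α) with hg_def
  have hg_nonneg : 0 ≤ g := fun n => by positivity
  have hg_top : Tendsto g atTop atTop := tendsto_pow_mul_rpow_neg_atTop hd α
  have hsum_g : (fun n => ∑ k ∈ range n, g (k + 1)) ~[atTop] fun n => (1 - d⁻¹)⁻¹ * g n :=
    isEquivalent_sum_range_succ_of_tendsto_div_succ hg_nonneg (inv_lt_one_of_one_lt₀ hd).ne
      (tendsto_pow_mul_rpow_neg_div_succ (by positivity) α) hg_top
  have hu_succ : (fun k => u (k + 1)) ~[atTop] fun k => c * g (k + 1) := by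
    refine (hu.comp_tendsto (tendsto_add_atTop_nat 1)).congr_right
      (Eventually.of_forall fun k => ?_)
    simp only [Function.comp_apply, hg_def, mul_assoc]
  have hsum_u : (fun n => ∑ k ∈ range n, u (k + 1)) ~[atTop]
      fun n => ∑ k ∈ range n, c * g (k + 1) :=
    hu_succ.sum_range (fun k => by positivity)
      (tendsto_sum_range_atTop_of_tendsto_atTop (fun k => by positivity)
        ((hg_top.comp (tendsto_add_atTop_nat 1)).const_mul_atTop hc))
  have hsum_c : (fun n => ∑ k ∈ range n, c * g (k + 1)) ~[atTop]
      fun n => c * ((1 - d⁻¹)⁻¹ * g n) := by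
    simpa only [Pi.mul_def, mul_sum] using (IsEquivalent.refl (u := fun _ : ℕ => c)).mul hsum_g
  have hconst : (fun n => c * ((1 - d⁻¹)⁻¹ * g n)) =
      fun n : ℕ => c * (d / (d - 1)) * d ^ n * (n : ℝ) ^ (-α) := by
    have hd1 : d - 1 ≠ 0 := sub_ne_zero.mpr hd.ne'
    ext n
    simp only [hg_def]
    field_simp
  simp only [sum_Icc_one_eq_sum_range_succ, ← hconst]
  exact hsum_u.trans hsum_c

theorem sum_isEquivalent_of_isEquivalent_geom
    (u : ℕ → ℝ) (c α d : ℝ) (hc : 0 < c) (hα : 0 ≤ α) (hd : 1 < d)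
    (hu : Asymptotics.IsEquivalent atTop u
      (fun n => c * d ^ n * (n : ℝ) ^ (-α))) :
    Asymptotics.IsEquivalent atTop
      (fun n => ∑ k ∈ Finset.Icc 1 n, u k)
      (fun n => c * (d / (d - 1)) * d ^ n * (n : ℝ) ^ (-α)) :=
  sum_isEquivalent_of_isEquivalent_geom_general u c α d hc hd hu
end

section
/- Let (a_n) be a real sequence and let c > 0 and d > 1 be real constants such that a_n is asymptotically equivalent to c · d^n · n^(−3/2) as n → ∞, and additionally a_n ≥ 1 for all n ≥ 1. Define b_n = ∑_{i=1}^{n} a_i. Then the ratio (b_{n+1} · (ln b_{n+1} + ln ln b_{n+1})) / (∑_{i=1}^{n} i · a_i) converges to d · ln d as n → ∞. -/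
/-! For a nonnegative sequence `u` with `u (n + 1) / u n → d > 1`, the partial sums diverge and
the increments `u (i + 1) - u i ~ (d - 1) u i` sum to `u n ~ (d - 1) ∑_{i<n} u i`. The asymptotic
for `a` gives `a (n + 1) / a n → d`; applied to `a (i + 1)` and to `(i + 1) a (i + 1)` this gives
`b (n + 1) / b n → d`, `a (n + 1) / b n → d - 1` and `(n + 1) a (n + 1) / ∑ i a_i → d - 1`, so the
quotient behaves like `d (log b (n + 1) + log log b (n + 1)) / (n + 1)`. Finally
`log b (n + 1) / (n + 1) → log d` by Cesàro averaging of `log (b (i + 1) / b i) → log d`, and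
`log log b = o(log b)`. -/

open Filter Finset Real Asymptotics Topology

lemma sum_Icc_one_eq_sum_range {M : Type*} [AddCommMonoid M] (f : ℕ → M) (n : ℕ) :
    ∑ i ∈ Icc 1 n, f i = ∑ i ∈ range n, f (i + 1) := by
  rw [range_eq_Ico, sum_Ico_add', zero_add, Ico_add_one_right_eq_Icc]

lemma natCast_le_sum_range {u : ℕ → ℝ} (hu : ∀ i, 1 ≤ u i) (n : ℕ) :
    (n : ℝ) ≤ ∑ i ∈ range n, u i := by
  simpa using card_nsmul_le_sum (range n) u 1 fun i _ => hu i

lemma eventually_ne_zero_of_tendsto_div {α : Type*} {l : Filter α} {f g : α → ℝ} {c : ℝ}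
    (hc : c ≠ 0) (h : Tendsto (fun x => f x / g x) l (𝓝 c)) : ∀ᶠ x in l, g x ≠ 0 := by
  filter_upwards [h.eventually_ne hc] with x hx hg
  simp [hg] at hx

lemma tendsto_natCast_succ_div_natCast :
    Tendsto (fun n : ℕ => ((n + 1 : ℕ) : ℝ) / n) atTop (𝓝 1) := by
  simpa using (tendsto_natCast_div_add_atTop (1 : ℝ)).inv₀ one_ne_zero

lemma tendsto_mul_pow_mul_rpow_succ_div {c d : ℝ} (hc : c ≠ 0) (hd : d ≠ 0) (p : ℝ) :
    Tendsto (fun n : ℕ => c * d ^ (n + 1) * ((n + 1 : ℕ) : ℝ) ^ p / (c * d ^ n * (n : ℝ) ^ p))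
      atTop (𝓝 d) := by
  have h := (tendsto_natCast_succ_div_natCast.rpow_const (p := p) (Or.inl one_ne_zero)).const_mul d
  rw [one_rpow, mul_one] at h
  refine h.congr' ?_
  filter_upwards [eventually_gt_atTop 0] with n hn
  have hn' : (0 : ℝ) < n := Nat.cast_pos.2 hn
  have hnp : (n : ℝ) ^ p ≠ 0 := (rpow_pos_of_pos hn' p).ne'
  rw [div_rpow (Nat.cast_nonneg _) hn'.le, pow_succ]
  field_simp

lemma Asymptotics.IsEquivalent.tendsto_succ_div {u v : ℕ → ℝ} {d : ℝ} (huv : u ~[atTop] v)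
    (hv : Tendsto (fun n => v (n + 1) / v n) atTop (𝓝 d)) :
    Tendsto (fun n => u (n + 1) / u n) atTop (𝓝 d) :=
  ((huv.comp_tendsto (tendsto_add_atTop_nat 1)).div huv).tendsto_nhds_iff.2 hv

section RatioLimit

variable {u : ℕ → ℝ} {d : ℝ}

theorem tendsto_div_sum_range_of_tendsto_succ_div (hu : ∀ n, 0 ≤ u n) (hd : 1 < d)
    (h : Tendsto (fun n => u (n + 1) / u n) atTop (𝓝 d)) :
    Tendsto (fun n => u n / ∑ i ∈ range n, u i) atTop (𝓝 (d - 1)) := by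
  set B : ℕ → ℝ := fun n => ∑ i ∈ range n, u i with hB_def
  have hB : Tendsto B atTop atTop := by
    refine (not_summable_iff_tendsto_nat_atTop_of_nonneg hu).1
      (not_summable_of_ratio_test_tendsto_gt_one hd ?_)
    simpa only [Real.norm_of_nonneg (hu _)] using h
  have hne := eventually_ne_zero_of_tendsto_div (by linarith) h
  have hstep : (fun i => u (i + 1) - u i - (d - 1) * u i) =o[atTop] u := by
    rw [isLittleO_iff_tendsto' (hne.mono fun n hn h0 => absurd h0 hn)]
    have hlim : Tendsto (fun n => u (n + 1) / u n - d) atTop (𝓝 0) := by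
      simpa using h.sub_const d
    refine hlim.congr' ?_
    filter_upwards [hne] with n hn
    field_simp
    ring
  have hu0 : (fun _ => u 0) =o[atTop] B :=
    isLittleO_const_left.2 (Or.inr (tendsto_norm_atTop_atTop.comp hB))
  have hmain : (fun n => u n - (d - 1) * B n) =o[atTop] B := by
    refine ((hstep.sum_range hu hB).add hu0).congr (fun n => ?_) (fun _ => rfl)
    simp only [hB_def, sum_sub_distrib, sum_range_sub (fun i => u i), mul_sum]
    ring
  rw [isLittleO_iff_tendsto' ((hB.eventually_ne_atTop 0).mono fun n hn h0 => absurd h0 hn)]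
    at hmain
  have hlim : Tendsto (fun n => (u n - (d - 1) * B n) / B n + (d - 1)) atTop (𝓝 (d - 1)) := by
    simpa using hmain.add_const (d - 1)
  refine hlim.congr' ?_
  filter_upwards [hB.eventually_ne_atTop 0] with n hn
  rw [sub_div, mul_div_cancel_right₀ _ hn, sub_add_cancel]

theorem tendsto_sum_range_succ_div_sum_range (hu : ∀ n, 0 ≤ u n) (hd : 1 < d)
    (h : Tendsto (fun n => u (n + 1) / u n) atTop (𝓝 d)) :
    Tendsto (fun n => (∑ i ∈ range (n + 1), u i) / ∑ i ∈ range n, u i) atTop (𝓝 d) := by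
  have hlim := tendsto_div_sum_range_of_tendsto_succ_div hu hd h
  have hne := eventually_ne_zero_of_tendsto_div (sub_ne_zero.2 hd.ne') hlim
  refine (by simpa using hlim.const_add 1 : Tendsto (fun n => 1 + _) atTop (𝓝 d)).congr' ?_
  filter_upwards [hne] with n hn
  rw [sum_range_succ, add_div, div_self hn, add_comm]

theorem tendsto_log_div_natCast_of_tendsto_succ_div (hd : d ≠ 0)
    (h : Tendsto (fun n => u (n + 1) / u n) atTop (𝓝 d)) :
    Tendsto (fun n : ℕ => log (u n) / n) atTop (𝓝 (log d)) := by
  have hne := eventually_ne_zero_of_tendsto_div hd h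
  have hdiff : Tendsto (fun i => log (u (i + 1)) - log (u i)) atTop (𝓝 (log d)) := by
    refine (h.log hd).congr' ?_
    filter_upwards [hne, (tendsto_add_atTop_nat 1).eventually hne] with n h0 h1
    exact log_div h1 h0
  have h0 : Tendsto (fun n : ℕ => (n : ℝ)⁻¹ * log (u 0)) atTop (𝓝 0) := by
    simpa using tendsto_inv_atTop_nhds_zero_nat.mul_const (log (u 0))
  have hlim := hdiff.cesaro.add h0
  rw [add_zero] at hlim
  refine hlim.congr fun n => ?_
  rw [sum_range_sub (fun i => log (u i))]
  ring

end RatioLimit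

theorem tendsto_log_add_log_log_div_log :
    Tendsto (fun x => (log x + log (log x)) / log x) atTop (𝓝 1) := by
  have h := isLittleO_log_id_atTop.tendsto_div_nhds_zero.comp tendsto_log_atTop
  have hlim : Tendsto (fun x => 1 + log (log x) / log x) atTop (𝓝 1) := by
    simpa using h.const_add 1
  refine hlim.congr' ?_
  filter_upwards [tendsto_log_atTop.eventually_ne_atTop 0] with x hx
  rw [add_div, div_self hx]

theorem tendsto_log_add_log_log_div_of_tendsto_log_div {α : Type*} {l : Filter α}
    {x m : α → ℝ} {c : ℝ} (hx : Tendsto x l atTop)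
    (h : Tendsto (fun n => log (x n) / m n) l (𝓝 c)) :
    Tendsto (fun n => (log (x n) + log (log (x n))) / m n) l (𝓝 c) := by
  have hlim := h.mul (tendsto_log_add_log_log_div_log.comp hx)
  rw [mul_one] at hlim
  refine hlim.congr' ?_
  filter_upwards [(tendsto_log_atTop.comp hx).eventually_ne_atTop 0] with n hn
  simp only [Function.comp_apply] at hn ⊢
  field_simp

theorem ratio_tendsto_d_mul_log_d
    (a : ℕ → ℝ) (c d : ℝ) (hc : 0 < c) (hd : 1 < d)
    (ha : Asymptotics.IsEquivalent atTop a
      (fun n => c * d ^ n * (n : ℝ) ^ (-(3 / 2 : ℝ))))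
    (ha1 : ∀ n ≥ 1, 1 ≤ a n)
    (b : ℕ → ℝ) (hb : ∀ n, b n = ∑ i ∈ Finset.Icc 1 n, a i) :
    Filter.Tendsto
      (fun n => b (n + 1) * (Real.log (b (n + 1)) + Real.log (Real.log (b (n + 1)))) /
        (∑ i ∈ Finset.Icc 1 n, (i : ℝ) * a i))
      atTop (nhds (d * Real.log d)) := by
  set u : ℕ → ℝ := fun i => a (i + 1)
  set v : ℕ → ℝ := fun i => ((i + 1 : ℕ) : ℝ) * u i
  have hu1 : ∀ i, 1 ≤ u i := fun i => ha1 _ (Nat.le_add_left 1 i)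
  have hbu : ∀ n, b n = ∑ i ∈ range n, u i := fun n => (hb n).trans (sum_Icc_one_eq_sum_range a n)
  have hSv : ∀ n : ℕ, ∑ i ∈ Icc 1 n, (i : ℝ) * a i = ∑ i ∈ range n, v i :=
    sum_Icc_one_eq_sum_range _
  have hu0 : ∀ i, 0 ≤ u i := fun i => zero_le_one.trans (hu1 i)
  have hv0 : ∀ i, 0 ≤ v i := fun i => mul_nonneg (Nat.cast_nonneg _) (hu0 i)
  have hu_ratio : Tendsto (fun n => u (n + 1) / u n) atTop (𝓝 d) :=
    (ha.tendsto_succ_div (tendsto_mul_pow_mul_rpow_succ_div hc.ne' (by positivity) _)).comp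
      (tendsto_add_atTop_nat 1)
  have hv_ratio : Tendsto (fun n => v (n + 1) / v n) atTop (𝓝 d) := by
    have h := (tendsto_natCast_succ_div_natCast.comp (tendsto_add_atTop_nat 1)).mul hu_ratio
    rw [one_mul] at h
    exact h.congr fun n => (mul_div_mul_comm _ _ _ _).symm
  have hub : Tendsto (fun n => u n / b n) atTop (𝓝 (d - 1)) := by
    simpa only [hbu] using tendsto_div_sum_range_of_tendsto_succ_div hu0 hd hu_ratio
  have hvS : Tendsto (fun n => v n / ∑ i ∈ Icc 1 n, (i : ℝ) * a i) atTop (𝓝 (d - 1)) := by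
    simpa only [hSv] using tendsto_div_sum_range_of_tendsto_succ_div hv0 hd hv_ratio
  have hb_ratio : Tendsto (fun n => b (n + 1) / b n) atTop (𝓝 d) := by
    simpa only [hbu] using tendsto_sum_range_succ_div_sum_range hu0 hd hu_ratio
  have hb_top : Tendsto (fun n => b (n + 1)) atTop atTop :=
    tendsto_atTop_mono (fun n => hbu (n + 1) ▸ natCast_le_sum_range hu1 (n + 1))
      (tendsto_natCast_atTop_atTop.comp (tendsto_add_atTop_nat 1))
  have hlog : Tendsto (fun n => (log (b (n + 1)) + log (log (b (n + 1)))) / ((n + 1 : ℕ) : ℝ))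
      atTop (𝓝 (log d)) :=
    tendsto_log_add_log_log_div_of_tendsto_log_div hb_top
      ((tendsto_log_div_natCast_of_tendsto_succ_div (by positivity) hb_ratio).comp
        (tendsto_add_atTop_nat 1))
  have hd1 : d - 1 ≠ 0 := sub_ne_zero.2 hd.ne'
  have hlim := ((hb_ratio.mul (hub.inv₀ hd1)).mul hvS).mul hlog
  rw [inv_mul_cancel_right₀ hd1] at hlim
  refine hlim.congr' ?_
  filter_upwards [eventually_ne_zero_of_tendsto_div (by positivity) hb_ratio] with n hbn
  have hun : u n ≠ 0 := (one_pos.trans_le (hu1 n)).ne'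
  simp only [v]
  field_simp
end

section
/- Let (a_n)_{n≥1} be a sequence of positive integers and let c > 0 and d > 1 be real constants such that a_n is asymptotically equivalent to c · d^n · n^(−3/2) as n → ∞. Define b_n = ∑_{i=1}^{n} a_i (with b_0 = 0), and for every integer k ≥ 1 let n(k) be the unique nonnegative integer n with b_n < k ≤ b_{n+1}, and define t_k = 1 + ∑_{i=1}^{n(k)} i · a_i + (n(k)+1) · (k − b_{n(k)}). Then k · (ln k + ln ln k) = O(t_k) as k → ∞; that is, there exist a constant C > 0 and an integer K such that for all k ≥ K, k · (ln k + ln ln k) ≤ C · t_k. -/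
open Filter Finset Real Asymptotics

/-! Since `a n = O(d ^ n)`, also `b n = O(d ^ n)`. For `m ≤ n(k)` every term of `t k` beyond the
first `b m` carries weight at least `m`, so `t k ≥ m * (k - b m)`. Taking `m ≈ log k / (2 log d)`
gives `d ^ m ≤ √k`, hence `b m ≤ k / 2` for large `k`, and so
`t k ≥ m * k / 2 ≥ k log k / (8 log d)`, while `k (log k + log log k) ≤ 2 k log k`. -/

lemma isBigO_sum_Icc_pow {E : Type*} [NormedAddCommGroup E] {f : ℕ → E} {d : ℝ} (hd : 1 < d)
    (hf : f =O[atTop] (d ^ ·)) : (fun n => ∑ i ∈ Icc 1 n, f i) =O[atTop] (d ^ ·) := by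
  have hd0 : 0 < d := one_pos.trans hd
  obtain ⟨C, hC⟩ := (isBigO_nat_atTop_iff fun n h => absurd h (pow_ne_zero n hd0.ne')).1 hf
  have hC0 : 0 ≤ C := by simpa using (norm_nonneg _).trans (hC 0)
  refine IsBigO.of_bound (C * (d / (d - 1))) (Eventually.of_forall fun n => ?_)
  have hgeom : ∑ i ∈ Icc 1 n, d ^ i ≤ d / (d - 1) * d ^ n :=
    calc ∑ i ∈ Icc 1 n, d ^ i ≤ ∑ i ∈ range (n + 1), d ^ i :=
          sum_le_sum_of_subset_of_nonneg
            (fun i hi => by simp only [Finset.mem_Icc, Finset.mem_range] at hi ⊢; omega)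
            fun _ _ _ => by positivity
      _ = (d ^ (n + 1) - 1) / (d - 1) := geom_sum_eq hd.ne' _
      _ ≤ d / (d - 1) * d ^ n := by
        rw [pow_succ, div_mul_eq_mul_div, mul_comm d]
        gcongr
        linarith
  calc ‖∑ i ∈ Icc 1 n, f i‖ ≤ ∑ i ∈ Icc 1 n, ‖f i‖ := norm_sum_le _ _
    _ ≤ ∑ i ∈ Icc 1 n, C * d ^ i :=
        sum_le_sum fun i _ => by simpa [abs_of_pos hd0] using hC i
    _ ≤ C * (d / (d - 1)) * ‖d ^ n‖ := by
        rw [← mul_sum, norm_of_nonneg (by positivity), mul_assoc]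
        exact mul_le_mul_of_nonneg_left hgeom hC0

lemma mul_sub_sum_le_weighted_sum {a : ℕ → ℝ} (ha : ∀ i, 0 ≤ a i) {m n : ℕ} (hmn : m ≤ n)
    {x : ℝ} (hx : ∑ i ∈ Icc 1 n, a i ≤ x) :
    m * (x - ∑ i ∈ Icc 1 m, a i) ≤
      ∑ i ∈ Icc 1 n, i * a i + (n + 1) * (x - ∑ i ∈ Icc 1 n, a i) := by
  have hsub : Icc 1 m ⊆ Icc 1 n := Icc_subset_Icc_right hmn
  have htail : (m : ℝ) * (∑ i ∈ Icc 1 n, a i - ∑ i ∈ Icc 1 m, a i) ≤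
      ∑ i ∈ Icc 1 n, i * a i := by
    rw [← sum_sdiff_eq_sub hsub, mul_sum]
    calc ∑ i ∈ Icc 1 n \ Icc 1 m, m * a i ≤ ∑ i ∈ Icc 1 n \ Icc 1 m, i * a i :=
          sum_le_sum fun i hi => by
            have hmi : m ≤ i := by simp only [Finset.mem_sdiff, Finset.mem_Icc] at hi; omega
            gcongr
            exact ha i
      _ ≤ ∑ i ∈ Icc 1 n, i * a i :=
          sum_le_sum_of_subset_of_nonneg sdiff_subset fun i _ _ => mul_nonneg i.cast_nonneg (ha i)
  have hlast : (m : ℝ) * (x - ∑ i ∈ Icc 1 n, a i) ≤ (n + 1) * (x - ∑ i ∈ Icc 1 n, a i) :=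
    mul_le_mul_of_nonneg_right (by norm_cast; omega) (sub_nonneg.2 hx)
  linarith

/-- For `1 < d` and `1 ≤ k`, the largest `m` with `d ^ (2 * m) ≤ k`. -/
noncomputable def logIndex (d : ℝ) (k : ℕ) : ℕ := ⌊log k / (2 * log d)⌋₊

lemma pow_logIndex_le_sqrt {d : ℝ} (hd : 1 < d) {k : ℕ} (hk : 0 < k) :
    d ^ logIndex d k ≤ √k := by
  have hL : 0 < log d := log_pos hd
  have hm : (logIndex d k : ℝ) * log d ≤ log k / 2 := by
    have : (logIndex d k : ℝ) ≤ log k / (2 * log d) := Nat.floor_le (by positivity)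
    rw [le_div_iff₀ (by positivity)] at this
    linarith
  rw [← rpow_natCast, rpow_def_of_pos (one_pos.trans hd), sqrt_eq_rpow,
    rpow_def_of_pos (by exact_mod_cast hk)]
  exact exp_le_exp.2 (by linarith)

lemma log_le_four_mul_logIndex {d : ℝ} (hd : 1 < d) {k : ℕ} (hk : 2 * log d ≤ log k) :
    log k ≤ 4 * log d * logIndex d k := by
  have hL : 0 < log d := log_pos hd
  set y := log k / (2 * log d)
  have hy : 1 ≤ y := (one_le_div (by positivity)).2 hk
  have hfloor : y < logIndex d k + 1 := Nat.lt_floor_add_one y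
  have hone : (1 : ℝ) ≤ logIndex d k := by exact_mod_cast Nat.one_le_floor_iff _ |>.2 hy
  have hlog : log k = 2 * log d * y := by simp only [y]; field_simp
  nlinarith

lemma tendsto_logIndex {d : ℝ} (hd : 1 < d) : Tendsto (logIndex d) atTop atTop :=
  tendsto_nat_floor_atTop.comp <|
    (tendsto_log_atTop.comp tendsto_natCast_atTop_atTop).atTop_div_const (by positivity [log_pos hd])

lemma eventually_le_half_of_isBigO_pow {β : ℕ → ℝ} {d : ℝ} (hd : 1 < d)
    (hβ : β =O[atTop] (d ^ ·)) : ∀ᶠ k : ℕ in atTop, β (logIndex d k) ≤ k / 2 := by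
  obtain ⟨K, hK0, hK⟩ := hβ.exists_pos
  filter_upwards [(tendsto_logIndex hd).eventually hK.bound,
    tendsto_natCast_atTop_atTop.eventually_ge_atTop ((2 * K) ^ 2), eventually_gt_atTop 0]
    with k hβk hk hk0
  have hsqrt : 2 * K ≤ √k := le_sqrt_of_sq_le hk
  calc β (logIndex d k) ≤ K * d ^ logIndex d k := by
        simpa [abs_of_pos (one_pos.trans hd)] using (le_abs_self _).trans hβk
    _ ≤ √k / 2 * √k := by
        gcongr
        · linarith
        · exact pow_logIndex_le_sqrt hd hk0
    _ = k / 2 := by rw [div_mul_eq_mul_div, mul_self_sqrt (Nat.cast_nonneg k)]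

theorem k_log_k_bigO_t_general
    (a : ℕ → ℕ) (c d : ℝ) (hd : 1 < d)
    (ha : Asymptotics.IsEquivalent atTop (fun n => (a n : ℝ))
      (fun n => c * d ^ n * (n : ℝ) ^ (-(3 / 2 : ℝ))))
    (b : ℕ → ℕ) (hb : ∀ n, b n = ∑ i ∈ Finset.Icc 1 n, a i)
    (nk : ℕ → ℕ) (hnk : ∀ k ≥ 1, b (nk k) < k ∧ k ≤ b (nk k + 1))
    (t : ℕ → ℝ)
    (ht : ∀ k ≥ 1, t k = 1 + (∑ i ∈ Finset.Icc 1 (nk k), (i : ℝ) * (a i : ℝ)) +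
      ((nk k : ℝ) + 1) * ((k : ℝ) - (b (nk k) : ℝ))) :
    ∃ C > 0, ∃ K : ℕ, ∀ k ≥ K,
      (k : ℝ) * (Real.log k + Real.log (Real.log k)) ≤ C * t k := by
  have hrpow : (fun n : ℕ => (n : ℝ) ^ (-(3 / 2 : ℝ))) =O[atTop] (fun _ => (1 : ℝ)) :=
    ((tendsto_rpow_neg_atTop (by norm_num)).comp tendsto_natCast_atTop_atTop).isBigO_one ℝ
  have hbO : (fun n => (b n : ℝ)) =O[atTop] (d ^ ·) := by
    simpa only [hb, Nat.cast_sum] using isBigO_sum_Icc_pow hd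
      (ha.isBigO.trans (by simpa using (isBigO_const_mul_self c (d ^ ·) atTop).mul hrpow))
  have hbmono : Monotone b := fun i j hij => by
    simpa only [hb] using sum_le_sum_of_subset (Icc_subset_Icc_right (a := 1) hij)
  have hL : 0 < log d := log_pos hd
  refine ⟨16 * log d, by positivity, eventually_atTop.1 ?_⟩
  filter_upwards [eventually_le_half_of_isBigO_pow hd hbO, eventually_ge_atTop 1,
    (tendsto_log_atTop.comp tendsto_natCast_atTop_atTop).eventually_ge_atTop (2 * log d)]
    with k hhalf hk hlogk
  set m := logIndex d k
  have hk0 : (0 : ℝ) < k := by exact_mod_cast hk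
  have hmk : m ≤ nk k := by
    by_contra! h
    have hkb : (k : ℝ) ≤ b m := by exact_mod_cast (hnk k hk).2.trans (hbmono h)
    linarith
  have ht_ge : m * (k - b m : ℝ) ≤ t k := by
    have hbk : ∑ i ∈ Icc 1 (nk k), (a i : ℝ) ≤ k := by
      exact_mod_cast hb (nk k) ▸ (hnk k hk).1.le
    have := mul_sub_sum_le_weighted_sum (fun i => Nat.cast_nonneg (a i)) hmk hbk
    rw [ht k hk, hb, hb]
    push_cast
    linarith
  have hm := log_le_four_mul_logIndex hd hlogk
  have hloglog : log (log k) ≤ log k := log_le_self (by positivity)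
  calc (k : ℝ) * (log k + log (log k)) ≤ 16 * log d * (m * (k / 2)) := by nlinarith
    _ ≤ 16 * log d * (m * (k - b m)) := by gcongr; linarith
    _ ≤ 16 * log d * t k := by gcongr

theorem k_log_k_bigO_t
    (a : ℕ → ℕ) (c d : ℝ) (hc : 0 < c) (hd : 1 < d)
    (hpos : ∀ n ≥ 1, 0 < a n)
    (ha : Asymptotics.IsEquivalent atTop (fun n => (a n : ℝ))
      (fun n => c * d ^ n * (n : ℝ) ^ (-(3 / 2 : ℝ))))
    (b : ℕ → ℕ) (hb : ∀ n, b n = ∑ i ∈ Finset.Icc 1 n, a i)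
    (nk : ℕ → ℕ) (hnk : ∀ k ≥ 1, b (nk k) < k ∧ k ≤ b (nk k + 1))
    (t : ℕ → ℝ)
    (ht : ∀ k ≥ 1, t k = 1 + (∑ i ∈ Finset.Icc 1 (nk k), (i : ℝ) * (a i : ℝ)) +
      ((nk k : ℝ) + 1) * ((k : ℝ) - (b (nk k) : ℝ))) :
    ∃ C > 0, ∃ K : ℕ, ∀ k ≥ K,
      (k : ℝ) * (Real.log k + Real.log (Real.log k)) ≤ C * t k :=
  k_log_k_bigO_t_general a c d hd ha b hb nk hnk t ht
end
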